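/- Let n ≥ 1, N = 2^n, 0 ≤ ε ≤ 1, and let E be an N×N unitary matrix over ℂ with |Tr(E)| ≥ N(1 − ε²). Let C₀ = ∑_{P ∈ 𝒫_n} r_P·P be an N×N matrix whose Pauli coefficients r_P satisfy: the support {P : r_P ≠ 0} has exactly M elements and |r_P| = 1/sqrt(M) for every P in the support. Then for every P₁ ∈ 𝒫_n with r_{P₁} ≠ 0: (1 − ε²)/sqrt(M) − sqrt(M)·sqrt(2ε² − ε⁴) ≤ |Tr(E·C₀·P₁)|/N ≤ 1/sqrt(M) + sqrt(M)·sqrt(2ε² − ε⁴). -/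

import Mathlib

/-!
Expanding `C₀` gives `Tr (E C₀ P₁) = r_{P₁} Tr E + ∑_{P ≠ P₁} r_P Tr (P P₁ E)`, using `P₁² = 1`.
The leading term has modulus `|Tr E| / √M`, between `N (1 - ε²) / √M` and `N / √M`.
For `P ≠ P₁` the product `P P₁` is a traceless unitary, so `1` and `(P P₁)ᴴ` are orthogonal
vectors of norm `√N` for the Frobenius inner product, and Bessel's inequality gives
`|Tr E|² + |Tr (P P₁ E)|² ≤ N²`; with `|Tr E| ≥ N (1 - ε²)` this is
`|Tr (P P₁ E)| ≤ N √(2ε² - ε⁴)`.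
Since `∑ |r_P| = M / √M = √M`, the triangle inequality gives both bounds.
-/

open Matrix

/-- The four single-qubit Pauli matrices: I, X, Y, Z. -/
noncomputable def pauliOne : Fin 4 → Matrix (Fin 2) (Fin 2) ℂ
  | 0 => 1
  | 1 => !![0, 1; 1, 0]
  | 2 => !![0, -Complex.I; Complex.I, 0]
  | 3 => !![1, 0; 0, -1]

/-- The `n`-qubit Pauli matrix indexed by `s : Fin n → Fin 4`: the `n`-fold
Kronecker (tensor) product of single-qubit Paulis, realized as a matrix on
the index type `Fin n → Fin 2` (of cardinality `2 ^ n`). -/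
noncomputable def PauliTensor (n : ℕ) (s : Fin n → Fin 4) :
    Matrix (Fin n → Fin 2) (Fin n → Fin 2) ℂ :=
  Matrix.of fun x y => ∏ i, pauliOne (s i) (x i) (y i)

namespace Matrix

variable {ι R : Type*} [Fintype ι] {κ : ι → Type*}

def piKronecker [CommMonoid R] (f : ∀ i, Matrix (κ i) (κ i) R) :
    Matrix (∀ i, κ i) (∀ i, κ i) R :=
  of fun x y => ∏ i, f i (x i) (y i)

theorem conjTranspose_piKronecker [CommSemiring R] [StarRing R]
    (f : ∀ i, Matrix (κ i) (κ i) R) :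
    (piKronecker f)ᴴ = piKronecker fun i => (f i)ᴴ := by
  ext x y
  simp [piKronecker, conjTranspose_apply, star_prod]

theorem piKronecker_one [CommSemiring R] [∀ i, DecidableEq (κ i)] :
    piKronecker (fun i => (1 : Matrix (κ i) (κ i) R)) = 1 := by
  ext x y
  by_cases h : x = y
  · subst h; simp [piKronecker]
  · obtain ⟨i, hi⟩ := Function.ne_iff.mp h
    rw [one_apply_ne h]
    exact Finset.prod_eq_zero (Finset.mem_univ i) (one_apply_ne hi)

variable [DecidableEq ι] [∀ i, Fintype (κ i)]

theorem piKronecker_mul [CommSemiring R] (f g : ∀ i, Matrix (κ i) (κ i) R) :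
    piKronecker f * piKronecker g = piKronecker fun i => f i * g i := by
  ext x y
  simp only [piKronecker, mul_apply, of_apply, ← Finset.prod_mul_distrib, Fintype.prod_sum]

theorem trace_piKronecker [CommSemiring R] (f : ∀ i, Matrix (κ i) (κ i) R) :
    (piKronecker f).trace = ∏ i, (f i).trace := by
  simp only [trace, diag, piKronecker, of_apply, Fintype.prod_sum]

end Matrix

theorem pauliOne_mul_self (k : Fin 4) : pauliOne k * pauliOne k = 1 := by
  fin_cases k <;> ext i j <;> fin_cases i <;> fin_cases j <;>
    simp [pauliOne, mul_apply, Fin.sum_univ_two, one_apply]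

theorem conjTranspose_pauliOne (k : Fin 4) : (pauliOne k)ᴴ = pauliOne k := by
  fin_cases k <;> ext i j <;> fin_cases i <;> fin_cases j <;>
    simp [pauliOne, conjTranspose_apply]

theorem trace_pauliOne_mul_of_ne {a b : Fin 4} (h : a ≠ b) :
    (pauliOne a * pauliOne b).trace = 0 := by
  fin_cases a <;> fin_cases b <;> simp_all [pauliOne, trace_fin_two]

section PauliTensor

variable {n : ℕ}

theorem PauliTensor_eq_piKronecker (s : Fin n → Fin 4) :
    PauliTensor n s = piKronecker fun i => pauliOne (s i) :=
  rfl

theorem PauliTensor_mul_self (s : Fin n → Fin 4) : PauliTensor n s * PauliTensor n s = 1 := by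
  simp only [PauliTensor_eq_piKronecker, piKronecker_mul, pauliOne_mul_self, piKronecker_one]

theorem conjTranspose_PauliTensor (s : Fin n → Fin 4) : (PauliTensor n s)ᴴ = PauliTensor n s := by
  simp only [PauliTensor_eq_piKronecker, conjTranspose_piKronecker, conjTranspose_pauliOne]

theorem PauliTensor_mem_unitaryGroup (s : Fin n → Fin 4) :
    PauliTensor n s ∈ unitaryGroup (Fin n → Fin 2) ℂ := by
  rw [mem_unitaryGroup_iff, star_eq_conjTranspose, conjTranspose_PauliTensor, PauliTensor_mul_self]

theorem trace_PauliTensor_mul_of_ne {s t : Fin n → Fin 4} (h : s ≠ t) :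
    (PauliTensor n s * PauliTensor n t).trace = 0 := by
  rw [PauliTensor_eq_piKronecker, PauliTensor_eq_piKronecker, piKronecker_mul, trace_piKronecker]
  obtain ⟨i, hi⟩ := Function.ne_iff.mp h
  exact Finset.prod_eq_zero (Finset.mem_univ i) (trace_pauliOne_mul_of_ne hi)

end PauliTensor

section Unitary

variable {ι : Type*} [Fintype ι] [DecidableEq ι]

theorem norm_trace_le_card_of_mem_unitaryGroup {𝕜 : Type*} [RCLike 𝕜] {E : Matrix ι ι 𝕜}
    (hE : E ∈ unitaryGroup ι 𝕜) : ‖E.trace‖ ≤ Fintype.card ι :=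
  calc ‖E.trace‖ ≤ ∑ i, ‖E i i‖ := norm_sum_le _ _
    _ ≤ ∑ _i : ι, (1 : ℝ) := Finset.sum_le_sum fun i _ => entry_norm_bound_of_unitary hE i i
    _ = Fintype.card ι := by simp

open scoped ComplexOrder in
theorem norm_trace_sq_add_norm_trace_mul_sq_le {E F : Matrix ι ι ℂ}
    (hE : E ∈ unitaryGroup ι ℂ) (hF : F ∈ unitaryGroup ι ℂ) (hF0 : F.trace = 0) :
    ‖E.trace‖ ^ 2 + ‖(F * E).trace‖ ^ 2 ≤ (Fintype.card ι : ℝ) ^ 2 := by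
  rcases (Fintype.card ι).eq_zero_or_pos with hι | hι
  · have := Fintype.card_eq_zero_iff.mp hι
    simp [trace]
  rw [mem_unitaryGroup_iff', star_eq_conjTranspose] at hE
  rw [mem_unitaryGroup_iff, star_eq_conjTranspose] at hF
  set N : ℂ := (Fintype.card ι : ℂ)
  set a := E.trace
  set b := (F * E).trace
  have hEt : Eᴴ.trace = star a := trace_conjTranspose E
  have hFt : Fᴴ.trace = 0 := by rw [trace_conjTranspose, hF0, star_zero]
  have hEFt : (Eᴴ * Fᴴ).trace = star b := by rw [← conjTranspose_mul, trace_conjTranspose]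
  -- `N⁻¹` times this matrix is `E` minus its Frobenius-orthogonal projection onto `span {1, Fᴴ}`.
  have hgram : ((N • E - a • 1 - b • Fᴴ)ᴴ * (N • E - a • 1 - b • Fᴴ)).trace
      = N * (N ^ 2 - star a * a - star b * b) := by
    simp only [conjTranspose_sub, conjTranspose_smul, conjTranspose_one,
      conjTranspose_conjTranspose, Matrix.sub_mul, Matrix.mul_sub, Matrix.smul_mul, Matrix.mul_smul, Matrix.one_mul,
      Matrix.mul_one, hE, hF, trace_sub, trace_smul, trace_one, hEt, hFt, hEFt, hF0, smul_eq_mul,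
      N, star_natCast]
    ring
  have hnonneg := (posSemidef_conjTranspose_mul_self (N • E - a • 1 - b • Fᴴ)).trace_nonneg
  have hreal : N * (N ^ 2 - star a * a - star b * b)
      = ((Fintype.card ι * ((Fintype.card ι) ^ 2 - ‖a‖ ^ 2 - ‖b‖ ^ 2) : ℝ) : ℂ) := by
    simp only [RCLike.star_def, Complex.conj_mul', N]
    push_cast
    ring
  rw [hgram, hreal, Complex.zero_le_real, mul_nonneg_iff_of_pos_left (by exact_mod_cast hι)]
    at hnonneg
  linarith

theorem norm_trace_mul_le_sqrt_of_le_norm_trace {E F : Matrix ι ι ℂ}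
    (hE : E ∈ unitaryGroup ι ℂ) (hF : F ∈ unitaryGroup ι ℂ) (hF0 : F.trace = 0)
    {c : ℝ} (hc : 0 ≤ c) (hcE : c ≤ ‖E.trace‖) :
    ‖(F * E).trace‖ ≤ √((Fintype.card ι : ℝ) ^ 2 - c ^ 2) := by
  have hBessel := norm_trace_sq_add_norm_trace_mul_sq_le hE hF hF0
  apply Real.le_sqrt_of_sq_le
  nlinarith [mul_le_mul hcE hcE hc (norm_nonneg _)]

end Unitary

theorem norm_trace_PauliTensor_mul_PauliTensor_mul_le {n : ℕ}
    {E : Matrix (Fin n → Fin 2) (Fin n → Fin 2) ℂ} (hE : E ∈ unitaryGroup (Fin n → Fin 2) ℂ)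
    {c : ℝ} (hc : 0 ≤ c) (hcE : c ≤ ‖E.trace‖) {s t : Fin n → Fin 4} (hst : s ≠ t) :
    ‖(PauliTensor n s * PauliTensor n t * E).trace‖ ≤ √((2 ^ n) ^ 2 - c ^ 2) := by
  have h := norm_trace_mul_le_sqrt_of_le_norm_trace hE
    (Submonoid.mul_mem _ (PauliTensor_mem_unitaryGroup s) (PauliTensor_mem_unitaryGroup t))
    (trace_PauliTensor_mul_of_ne hst) hc hcE
  simpa using h

theorem trace_mul_sum_smul_mul {ι α R : Type*} [Fintype ι] [DecidableEq ι] [Fintype α]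
    [DecidableEq α] [CommRing R] (E : Matrix ι ι R) (r : α → R) (P : α → Matrix ι ι R) {a : α}
    (ha : P a * P a = 1) :
    (E * (∑ s, r s • P s) * P a).trace
      = r a * E.trace + ∑ s ∈ Finset.univ.erase a, r s * (P s * P a * E).trace := by
  have hterm : ∀ s, (E * (r s • P s) * P a).trace = r s * (P s * P a * E).trace := fun s => by
    rw [Matrix.mul_smul, Matrix.smul_mul, trace_smul, smul_eq_mul, Matrix.mul_assoc,
      trace_mul_comm]
  rw [Matrix.mul_sum, Matrix.sum_mul, trace_sum, Finset.sum_congr rfl fun s _ => hterm s,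
    ← Finset.add_sum_erase _ _ (Finset.mem_univ a), ha, one_mul]

theorem sum_norm_eq_sqrt_card_support {α E : Type*} [Fintype α] [NormedAddCommGroup E]
    [DecidableEq E] {r : α → E} {M : ℕ} (hM : (Finset.univ.filter fun s => r s ≠ 0).card = M)
    (hr : ∀ s, r s ≠ 0 → ‖r s‖ = 1 / √M) :
    ∑ s, ‖r s‖ = √M := by
  rw [← Finset.sum_filter_of_ne fun s _ h => norm_ne_zero_iff.mp h,
    Finset.sum_congr rfl fun s hs => hr s (Finset.mem_filter.mp hs).2, Finset.sum_const, hM,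
    nsmul_eq_mul, mul_one_div, Real.div_sqrt]

theorem norm_sum_erase_mul_le {α R : Type*} [Fintype α] [DecidableEq α] [SeminormedRing R]
    {r t : α → R} {a : α} {C : ℝ} (ht : ∀ s ≠ a, ‖t s‖ ≤ C) (hC : 0 ≤ C) :
    ‖∑ s ∈ Finset.univ.erase a, r s * t s‖ ≤ (∑ s, ‖r s‖) * C :=
  calc _ ≤ ∑ s ∈ Finset.univ.erase a, ‖r s‖ * C :=
        (norm_sum_le _ _).trans <| Finset.sum_le_sum fun s hs => (norm_mul_le _ _).trans <|
          mul_le_mul_of_nonneg_left (ht s (Finset.ne_of_mem_erase hs)) (norm_nonneg _)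
    _ ≤ (∑ s, ‖r s‖) * C := by
        rw [← Finset.sum_mul]
        gcongr
        exact Finset.erase_subset _ _

theorem trace_bound_support_general (n : ℕ)
    (ε : ℝ) (hε0 : 0 ≤ ε) (hε1 : ε ≤ 1)
    (E : Matrix (Fin n → Fin 2) (Fin n → Fin 2) ℂ)
    (hE : E ∈ Matrix.unitaryGroup (Fin n → Fin 2) ℂ)
    (hEtr : (2 : ℝ) ^ n * (1 - ε ^ 2) ≤ ‖E.trace‖)
    (r : (Fin n → Fin 4) → ℂ) (C₀ : Matrix (Fin n → Fin 2) (Fin n → Fin 2) ℂ)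
    (hC₀ : C₀ = ∑ s : Fin n → Fin 4, r s • PauliTensor n s)
    (M : ℕ) (hM : (Finset.univ.filter (fun s => r s ≠ 0)).card = M)
    (hr : ∀ s : Fin n → Fin 4, r s ≠ 0 → ‖r s‖ = 1 / Real.sqrt M)
    (s₁ : Fin n → Fin 4) (hs₁ : r s₁ ≠ 0) :
    (1 - ε ^ 2) / Real.sqrt M - Real.sqrt M * Real.sqrt (2 * ε ^ 2 - ε ^ 4)
        ≤ ‖(E * C₀ * PauliTensor n s₁).trace‖ / (2 : ℝ) ^ n ∧
      ‖(E * C₀ * PauliTensor n s₁).trace‖ / (2 : ℝ) ^ n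
        ≤ 1 / Real.sqrt M + Real.sqrt M * Real.sqrt (2 * ε ^ 2 - ε ^ 4) := by
  set N : ℝ := 2 ^ n
  set δ := 2 * ε ^ 2 - ε ^ 4
  have hε : 0 ≤ 1 - ε ^ 2 := by nlinarith
  have hM0 : 0 < √M := Real.sqrt_pos.mpr <| Nat.cast_pos.mpr <|
    hM ▸ Finset.card_pos.mpr ⟨s₁, Finset.mem_filter.mpr ⟨Finset.mem_univ _, hs₁⟩⟩
  have hsqrt : √(N ^ 2 - (N * (1 - ε ^ 2)) ^ 2) = N * √δ := by
    rw [show N ^ 2 - (N * (1 - ε ^ 2)) ^ 2 = N ^ 2 * δ by ring,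
      Real.sqrt_mul' _ (by nlinarith), Real.sqrt_sq (by positivity)]
  have hrest := norm_sum_erase_mul_le (r := r) (a := s₁) (fun s hs =>
    (norm_trace_PauliTensor_mul_PauliTensor_mul_le hE (by positivity) hEtr hs).trans_eq hsqrt)
    (by positivity)
  rw [sum_norm_eq_sqrt_card_support hM hr] at hrest
  have hEtr_le : ‖E.trace‖ ≤ N := by simpa [N] using norm_trace_le_card_of_mem_unitaryGroup hE
  have hlead_ge : N * (1 - ε ^ 2) / √M ≤ ‖r s₁ * E.trace‖ := by
    rw [norm_mul, hr s₁ hs₁, one_div_mul_eq_div]; gcongr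
  have hlead_le : ‖r s₁ * E.trace‖ ≤ N / √M := by
    rw [norm_mul, hr s₁ hs₁, one_div_mul_eq_div]; gcongr
  rw [hC₀, trace_mul_sum_smul_mul _ _ _ (PauliTensor_mul_self s₁)]
  set R := ∑ s ∈ Finset.univ.erase s₁, r s * (PauliTensor n s * PauliTensor n s₁ * E).trace
  have hlo := norm_sub_le_norm_add (r s₁ * E.trace) R
  have hhi := norm_add_le (r s₁ * E.trace) R
  constructor
  · rw [le_div_iff₀ (by positivity)]
    linarith [show ((1 - ε ^ 2) / √M - √M * √δ) * N = N * (1 - ε ^ 2) / √M - √M * (N * √δ) by ring]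
  · rw [div_le_iff₀ (by positivity)]
    linarith [show (1 / √M + √M * √δ) * N = N / √M + √M * (N * √δ) by ring]

/-- Theorem: bounds on `|Tr (E * C₀ * P₁)| / N` for `P₁` in the support of the
Pauli expansion of `C₀`, when `E` is a unitary with `|Tr E| ≥ N (1 - ε²)` and
all nonzero Pauli coefficients of `C₀` have modulus `1 / √M`, `M` being the
size of the support. -/
theorem trace_bound_support (n : ℕ) (hn : 1 ≤ n)
    (ε : ℝ) (hε0 : 0 ≤ ε) (hε1 : ε ≤ 1)
    (E : Matrix (Fin n → Fin 2) (Fin n → Fin 2) ℂ)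
    (hE : E ∈ Matrix.unitaryGroup (Fin n → Fin 2) ℂ)
    (hEtr : (2 : ℝ) ^ n * (1 - ε ^ 2) ≤ ‖E.trace‖)
    (r : (Fin n → Fin 4) → ℂ) (C₀ : Matrix (Fin n → Fin 2) (Fin n → Fin 2) ℂ)
    (hC₀ : C₀ = ∑ s : Fin n → Fin 4, r s • PauliTensor n s)
    (M : ℕ) (hM : (Finset.univ.filter (fun s => r s ≠ 0)).card = M)
    (hr : ∀ s : Fin n → Fin 4, r s ≠ 0 → ‖r s‖ = 1 / Real.sqrt M)
    (s₁ : Fin n → Fin 4) (hs₁ : r s₁ ≠ 0) :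
    (1 - ε ^ 2) / Real.sqrt M - Real.sqrt M * Real.sqrt (2 * ε ^ 2 - ε ^ 4)
        ≤ ‖(E * C₀ * PauliTensor n s₁).trace‖ / (2 : ℝ) ^ n ∧
      ‖(E * C₀ * PauliTensor n s₁).trace‖ / (2 : ℝ) ^ n
        ≤ 1 / Real.sqrt M + Real.sqrt M * Real.sqrt (2 * ε ^ 2 - ε ^ 4) :=
  trace_bound_support_general n ε hε0 hε1 E hE hEtr r C₀ hC₀ M hM hr s₁ hs₁
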